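/- (Theorem 1, part 2: permutation equivariance of causal graph filters) Let N ≥ 1, let A be an N×N real strictly lower triangular matrix with causal graph-shift operators S_k = W · D_k · W⁻¹, and let σ be a permutation of Fin N with permutation matrix P, yielding permuted GSOs S'_q built from A' = P A Pᵀ. For filter coefficients θ ∈ ℝ^N define the causal graph filter output g(x; θ) = ∑_{k} θ_k · S_k · x, and let θ' ∈ ℝ^N be given by θ'_{σ(k)} = θ_k (i.e., θ' = P θ) and x' = P x. Then ∑_{q} θ'_q · S'_q · x' = P · (∑_{k} θ_k · S_k · x) for every x ∈ ℝ^N. -/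

import Mathlib

/-!
Relabelling the nodes by `σ` turns `A` into its reindexing `A.submatrix σ⁻¹ σ⁻¹`. Inversion,
the zero pattern of the rows of `W`, and products of matrices all commute with such a
reindexing, so `S'_{σ k}` is `S_k` reindexed. Substituting `q = σ k` in the filter sum then
exhibits the permuted output as the original output reindexed, i.e. multiplied by `P`.
-/

open Matrix

section Relabel

variable {ι ι' m n R : Type*} [Fintype m] [Fintype n]

theorem sum_smul_mulVec_submatrix [Fintype ι] [Fintype ι'] [Semiring R] (σ : ι ≃ ι')
    (τ : m ≃ n) (θ : ι → R) (θ' : ι' → R) (hθ : ∀ k, θ' (σ k) = θ k)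
    (S : ι → Matrix n n R) (S' : ι' → Matrix m m R) (hS : ∀ k, S' (σ k) = (S k).submatrix τ τ)
    (x : n → R) :
    ∑ q, θ' q • (S' q *ᵥ (x ∘ τ)) = (∑ k, θ k • (S k *ᵥ x)) ∘ τ := by
  rw [← σ.sum_comp]
  ext i
  simp [hθ, hS, submatrix_mulVec_equiv, Finset.sum_apply, Function.comp_assoc]

variable [DecidableEq m] [DecidableEq n]

theorem permMatrix_mul_mul_transpose [NonAssocSemiring R] (τ : Equiv.Perm n)
    (A : Matrix n n R) :
    τ.permMatrix R * A * (τ.permMatrix R)ᵀ = A.submatrix τ τ := by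
  rw [transpose_permMatrix, PEquiv.toMatrix_toPEquiv_mul, PEquiv.mul_toMatrix_toPEquiv,
    submatrix_submatrix, Equiv.Perm.inv_def, Equiv.symm_symm]
  rfl

theorem inv_one_sub_submatrix_equiv [CommRing R] (A : Matrix n n R) (e : m ≃ n) :
    (1 - A.submatrix e e)⁻¹ = (1 - A)⁻¹.submatrix e e := by
  rw [← inv_submatrix_equiv, ← submatrix_one_equiv e]
  rfl

/-- The causal graph-shift operator `S_k = W D_k W⁻¹` of a transitive closure `W`. -/
noncomputable def causalShift [CommRing R] [DecidableEq R] (W : Matrix n n R) (k : n) :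
    Matrix n n R :=
  W * diagonal (fun i => if W k i ≠ 0 then 1 else 0) * W⁻¹

theorem causalShift_submatrix [CommRing R] [DecidableEq R] (W : Matrix n n R) (e : m ≃ n)
    (k : m) : causalShift (W.submatrix e e) k = (causalShift W (e k)).submatrix e e := by
  have hD : diagonal (fun i => if W.submatrix e e k i ≠ 0 then (1 : R) else 0) =
      (diagonal fun j => if W (e k) j ≠ 0 then (1 : R) else 0).submatrix e e :=
    (submatrix_diagonal_equiv (fun j => if W (e k) j ≠ 0 then (1 : R) else 0) e).symm
  rw [causalShift, causalShift, hD, inv_submatrix_equiv, submatrix_mul_equiv,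
    submatrix_mul_equiv]

end Relabel

theorem causal_graph_filter_equivariant_general {N : ℕ}
    (A : Matrix (Fin N) (Fin N) ℝ)
    (W : Matrix (Fin N) (Fin N) ℝ) (hW : W = (1 - A)⁻¹)
    (D : Fin N → Matrix (Fin N) (Fin N) ℝ)
    (hD : ∀ k, D k = Matrix.diagonal (fun i => if W k i ≠ 0 then (1 : ℝ) else 0))
    (S : Fin N → Matrix (Fin N) (Fin N) ℝ)
    (hS : ∀ k, S k = W * D k * W⁻¹)
    (σ : Equiv.Perm (Fin N))
    (P : Matrix (Fin N) (Fin N) ℝ)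
    (hP : ∀ i j : Fin N, P i j = if σ j = i then 1 else 0)
    (A' : Matrix (Fin N) (Fin N) ℝ) (hA'def : A' = P * A * Pᵀ)
    (W' : Matrix (Fin N) (Fin N) ℝ) (hW' : W' = (1 - A')⁻¹)
    (D' : Fin N → Matrix (Fin N) (Fin N) ℝ)
    (hD' : ∀ q, D' q = Matrix.diagonal (fun i => if W' q i ≠ 0 then (1 : ℝ) else 0))
    (S' : Fin N → Matrix (Fin N) (Fin N) ℝ)
    (hS' : ∀ q, S' q = W' * D' q * W'⁻¹)
    (θ θ' : Fin N → ℝ) (hθ' : ∀ k : Fin N, θ' (σ k) = θ k)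
    (x x' : Fin N → ℝ) (hx' : x' = P *ᵥ x) :
    ∑ q : Fin N, θ' q • (S' q *ᵥ x') = P *ᵥ (∑ k : Fin N, θ k • (S k *ᵥ x)) := by
  have hPσ : P = Equiv.Perm.permMatrix ℝ σ.symm := by
    ext i j
    simp [hP, Equiv.eq_symm_apply, eq_comm]
  have hW'W : W' = W.submatrix σ.symm σ.symm := by
    rw [hW', hA'def, hPσ, permMatrix_mul_mul_transpose, hW, inv_one_sub_submatrix_equiv]
  have hS_eq : ∀ k, S k = causalShift W k := fun k => by rw [hS, hD]; rfl
  have hS'_eq : ∀ q, S' q = causalShift W' q := fun q => by rw [hS', hD']; rfl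
  have hS'S : ∀ k, S' (σ k) = (S k).submatrix σ.symm σ.symm := fun k => by
    rw [hS'_eq, hS_eq, hW'W, causalShift_submatrix, Equiv.symm_apply_apply]
  rw [hx', hPσ, permMatrix_mulVec, permMatrix_mulVec]
  exact sum_smul_mulVec_submatrix σ σ.symm θ θ' hθ' S S' hS'S x

/-- Theorem 1, part 2: Causal graph filters are permutation
equivariant: with permuted coefficients `θ'_{σ(k)} = θ k` and permuted input
`x' = P x`, we have `∑_q θ'_q • S'_q x' = P (∑_k θ_k • S_k x)`. -/
theorem causal_graph_filter_equivariant {N : ℕ} (hN : 1 ≤ N)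
    (A : Matrix (Fin N) (Fin N) ℝ)
    (hA : ∀ i j : Fin N, i ≤ j → A i j = 0)
    (W : Matrix (Fin N) (Fin N) ℝ) (hW : W = (1 - A)⁻¹)
    (D : Fin N → Matrix (Fin N) (Fin N) ℝ)
    (hD : ∀ k, D k = Matrix.diagonal (fun i => if W k i ≠ 0 then (1 : ℝ) else 0))
    (S : Fin N → Matrix (Fin N) (Fin N) ℝ)
    (hS : ∀ k, S k = W * D k * W⁻¹)
    (σ : Equiv.Perm (Fin N))
    (P : Matrix (Fin N) (Fin N) ℝ)
    (hP : ∀ i j : Fin N, P i j = if σ j = i then 1 else 0)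
    (A' : Matrix (Fin N) (Fin N) ℝ) (hA'def : A' = P * A * Pᵀ)
    (W' : Matrix (Fin N) (Fin N) ℝ) (hW' : W' = (1 - A')⁻¹)
    (D' : Fin N → Matrix (Fin N) (Fin N) ℝ)
    (hD' : ∀ q, D' q = Matrix.diagonal (fun i => if W' q i ≠ 0 then (1 : ℝ) else 0))
    (S' : Fin N → Matrix (Fin N) (Fin N) ℝ)
    (hS' : ∀ q, S' q = W' * D' q * W'⁻¹)
    (θ θ' : Fin N → ℝ) (hθ' : ∀ k : Fin N, θ' (σ k) = θ k)
    (x x' : Fin N → ℝ) (hx' : x' = P *ᵥ x) :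
    ∑ q : Fin N, θ' q • (S' q *ᵥ x') = P *ᵥ (∑ k : Fin N, θ k • (S k *ᵥ x)) :=
  causal_graph_filter_equivariant_general A W hW D hD S hS σ P hP A' hA'def W' hW' D' hD' S' hS' θ
    θ' hθ' x x' hx'
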